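/- arXiv:1108.3207 — 4 statements merged into one kernel-verified Lean document; each statement's English description precedes it below -/
import Mathlib

section
/- Let $\mathcal{A} \subseteq \mathcal{P}[n]$, let $U \subseteq [n]$ have even order, let $v \in [n] - U$, and let $f : U \to U$ be a pairing function. Then for every nonnegative integer $m$, the number of intersecting subfamilies of $\mathcal{C}_{U,v,f}(\mathcal{A})$ of order $m$ is at least the number of intersecting subfamilies of $\mathcal{A}$ of order $m$. -/
open Finset

/-- A family of finite sets is intersecting if any two members meet. -/
def IsIntersecting (𝓑 : Finset (Finset ℕ)) : Prop :=
  ∀ A ∈ 𝓑, ∀ B ∈ 𝓑, (A ∩ B).Nonempty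

instance : DecidablePred IsIntersecting :=
  fun 𝓑 => decidable_of_iff (∀ A ∈ 𝓑, ∀ B ∈ 𝓑, (A ∩ B).Nonempty) Iff.rfl

/-- A family is `t`-intersecting if any two members meet in at least `t` elements. -/
def TIntersecting (t : ℕ) (𝓐 : Finset (Finset ℕ)) : Prop :=
  ∀ A ∈ 𝓐, ∀ B ∈ 𝓐, t ≤ (A ∩ B).card

/-- The probability that the p-random subfamily of `𝓐` is intersecting. -/
noncomputable def probInter (p : ℝ) (𝓐 : Finset (Finset ℕ)) : ℝ :=
  ∑ 𝓑 ∈ 𝓐.powerset.filter IsIntersecting,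
    p ^ 𝓑.card * (1 - p) ^ (𝓐.card - 𝓑.card)

/-- The number of intersecting subfamilies of `𝓐` of order `m`. -/
def numInter (𝓐 : Finset (Finset ℕ)) (m : ℕ) : ℕ :=
  ((𝓐.powerset.filter IsIntersecting).filter (fun 𝓑 => 𝓑.card = m)).card

/-- `[n]^{(≥ r)}`: all subsets of `[n] = {1,…,n}` of size at least `r`. -/
def atLeast (n r : ℕ) : Finset (Finset ℕ) :=
  (Finset.Icc 1 n).powerset.filter (fun A => r ≤ A.card)

/-- `[n]^{(r)}`: all subsets of `[n] = {1,…,n}` of size exactly `r`. -/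
def uniformFam (n r : ℕ) : Finset (Finset ℕ) :=
  Finset.powersetCard r (Finset.Icc 1 n)

/-- The `ij`-compression of a set. -/
def setCompress (i j : ℕ) (A : Finset ℕ) : Finset ℕ :=
  if j ∈ A ∧ i ∉ A then insert i (A.erase j) else A

/-- The `ij`-compression of a family. -/
def famCompress (i j : ℕ) (𝓐 : Finset (Finset ℕ)) : Finset (Finset ℕ) :=
  𝓐.image (setCompress i j) ∪ 𝓐.filter (fun A => setCompress i j A ∈ 𝓐)

/-- A family is left-compressed if it is `ij`-compressed for all `i < j` in `[n]`. -/
def LeftCompressed (n : ℕ) (𝓐 : Finset (Finset ℕ)) : Prop :=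
  ∀ i j : ℕ, 1 ≤ i → i < j → j ≤ n → famCompress i j 𝓐 = 𝓐

/-- The `UV`-compression of a set. -/
def setUV (U V A : Finset ℕ) : Finset ℕ :=
  if V ⊆ A ∧ Disjoint U A then (A ∪ U) \ V else A

/-- The `UV`-compression of a family. -/
def famUV (U V : Finset ℕ) (𝓐 : Finset (Finset ℕ)) : Finset (Finset ℕ) :=
  𝓐.image (setUV U V) ∪ 𝓐.filter (fun A => setUV U V A ∈ 𝓐)

/-- `f` is a pairing function on `U`: an involution on `U` with no fixed point. -/
def IsPairing (f : ℕ → ℕ) (U : Finset ℕ) : Prop :=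
  (∀ x ∈ U, f x ∈ U) ∧ (∀ x ∈ U, f (f x) = x) ∧ (∀ x ∈ U, f x ≠ x)

/-- The `(U,v,f)`-compression of a set. -/
def setUvf (U : Finset ℕ) (v : ℕ) (f : ℕ → ℕ) (A : Finset ℕ) : Finset ℕ :=
  if v ∈ A then A else (A ∩ U).image f ∪ {v} ∪ (A \ U)

/-- The `(U,v,f)`-compression of a family. -/
def famUvf (U : Finset ℕ) (v : ℕ) (f : ℕ → ℕ) (𝓐 : Finset (Finset ℕ)) : Finset (Finset ℕ) :=
  𝓐.image (setUvf U v f) ∪ 𝓐.filter (fun A => setUvf U v f A ∈ 𝓐)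

/-!
Write `C` for the compression of a set. A member of `𝓐` containing `v` survives the
compression, and a `v`-free member `A` disappears exactly when `C A ∉ 𝓐`. An intersecting
`𝓑 ⊆ 𝓐` is sent to the family obtained by compressing its *forced* members: the least set of
`v`-free members of `𝓑` that contains those whose compression is not in `𝓐` and every member
disjoint from the compression of a forced one. Compressed sets all contain `v`, and for `v`-free
`X, B` the set `C X` meets `B` iff `X` meets `C B` (because `f` is an involution), so the image
is intersecting and lies in the compressed family. Induction along the closure shows that no
forced set has its compression in `𝓑`; this makes the map preserve the order and be injective.
-/

/-- The properties of `setUvf U v f` on which the counting argument rests. -/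
structure IsCompressionTo (C : Finset ℕ → Finset ℕ) (v : ℕ) : Prop where
  mem_apply (A : Finset ℕ) : v ∈ C A
  apply_of_mem {A : Finset ℕ} : v ∈ A → C A = A
  injOn : Set.InjOn C {A | v ∉ A}
  nonempty_inter_apply {X B : Finset ℕ} :
    v ∉ X → v ∉ B → (C X ∩ B).Nonempty → (X ∩ C B).Nonempty

def compressFamily (C : Finset ℕ → Finset ℕ) (𝓐 : Finset (Finset ℕ)) : Finset (Finset ℕ) :=
  𝓐.image C ∪ 𝓐.filter (fun A => C A ∈ 𝓐)

inductive IsForced (C : Finset ℕ → Finset ℕ) (v : ℕ) (𝓐 𝓑 : Finset (Finset ℕ)) :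
    Finset ℕ → Prop
  | apply_not_mem {A : Finset ℕ} : A ∈ 𝓑 → v ∉ A → C A ∉ 𝓐 → IsForced C v 𝓐 𝓑 A
  | disjoint_apply {X A : Finset ℕ} :
      IsForced C v 𝓐 𝓑 X → A ∈ 𝓑 → v ∉ A → Disjoint A (C X) → IsForced C v 𝓐 𝓑 A

open Classical in
noncomputable def forcedPart (C : Finset ℕ → Finset ℕ) (v : ℕ) (𝓐 𝓑 : Finset (Finset ℕ)) :
    Finset (Finset ℕ) :=
  𝓑.filter (IsForced C v 𝓐 𝓑)

noncomputable def compressForced (C : Finset ℕ → Finset ℕ) (v : ℕ) (𝓐 𝓑 : Finset (Finset ℕ)) :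
    Finset (Finset ℕ) :=
  (𝓑 \ forcedPart C v 𝓐 𝓑) ∪ (forcedPart C v 𝓐 𝓑).image C

section Compression

variable {C : Finset ℕ → Finset ℕ} {v : ℕ} {𝓐 𝓑 𝓑₁ 𝓑₂ : Finset (Finset ℕ)} {A X : Finset ℕ}

lemma IsForced.mem (h : IsForced C v 𝓐 𝓑 A) : A ∈ 𝓑 := by
  cases h <;> assumption

lemma IsForced.not_mem (h : IsForced C v 𝓐 𝓑 A) : v ∉ A := by
  cases h <;> assumption

lemma mem_forcedPart : A ∈ forcedPart C v 𝓐 𝓑 ↔ IsForced C v 𝓐 𝓑 A := by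
  classical
  simpa [forcedPart] using IsForced.mem

lemma forcedPart_subset : forcedPart C v 𝓐 𝓑 ⊆ 𝓑 :=
  fun _ hA => (mem_forcedPart.1 hA).mem

lemma IsForced.apply_mem_compressForced (h : IsForced C v 𝓐 𝓑 X) :
    C X ∈ compressForced C v 𝓐 𝓑 :=
  mem_union_right _ (mem_image_of_mem C (mem_forcedPart.2 h))

lemma isForced_of_apply_mem_compressForced (hC : IsCompressionTo C v) (hX : v ∉ X)
    (h : C X ∈ compressForced C v 𝓐 𝓑) (h' : C X ∉ 𝓑) : IsForced C v 𝓐 𝓑 X := by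
  rcases mem_union.1 h with h | h
  · exact absurd (mem_sdiff.1 h).1 h'
  · obtain ⟨Y, hY, hYX⟩ := mem_image.1 h
    rw [mem_forcedPart] at hY
    rwa [← hC.injOn hY.not_mem hX hYX]

lemma IsForced.apply_not_mem_of_compressForced_eq (hC : IsCompressionTo C v) (h𝓑₁ : 𝓑₁ ⊆ 𝓐)
    (hint : IsIntersecting 𝓑₁) (heq : compressForced C v 𝓐 𝓑₁ = compressForced C v 𝓐 𝓑₂)
    (hX : IsForced C v 𝓐 𝓑₂ X) : C X ∉ 𝓑₁ := by
  induction hX with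
  | apply_not_mem _ _ hCA => exact fun h => hCA (h𝓑₁ h)
  | @disjoint_apply X A hX _ hvA hdisj ih =>
    intro hCA
    have hX₁ : X ∈ 𝓑₁ :=
      (isForced_of_apply_mem_compressForced hC hX.not_mem
        (heq ▸ hX.apply_mem_compressForced) ih).mem
    exact not_disjoint_iff_nonempty_inter.2
      (hC.nonempty_inter_apply hvA hX.not_mem (hint _ hCA _ hX₁)) hdisj

lemma compressForced_subset (hC : IsCompressionTo C v) (h𝓑 : 𝓑 ⊆ 𝓐) :
    compressForced C v 𝓐 𝓑 ⊆ compressFamily C 𝓐 := by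
  intro A hA
  rcases mem_union.1 hA with hA | hA
  · obtain ⟨hA𝓑, hAf⟩ := mem_sdiff.1 hA
    refine mem_union_right _ (mem_filter.2 ⟨h𝓑 hA𝓑, ?_⟩)
    by_cases hv : v ∈ A
    · rw [hC.apply_of_mem hv]
      exact h𝓑 hA𝓑
    · by_contra hCA
      exact hAf (mem_forcedPart.2 (.apply_not_mem hA𝓑 hv hCA))
  · obtain ⟨X, hX, rfl⟩ := mem_image.1 hA
    exact mem_union_left _ (mem_image_of_mem C (h𝓑 (forcedPart_subset hX)))

lemma isIntersecting_compressForced (hC : IsCompressionTo C v) (hint : IsIntersecting 𝓑) :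
    IsIntersecting (compressForced C v 𝓐 𝓑) := by
  have meets : ∀ A ∈ 𝓑 \ forcedPart C v 𝓐 𝓑, ∀ X ∈ forcedPart C v 𝓐 𝓑, (A ∩ C X).Nonempty := by
    intro A hA X hX
    obtain ⟨hA𝓑, hAf⟩ := mem_sdiff.1 hA
    by_cases hv : v ∈ A
    · exact ⟨v, mem_inter.2 ⟨hv, hC.mem_apply X⟩⟩
    · rw [← not_disjoint_iff_nonempty_inter]
      exact fun hdisj => hAf (mem_forcedPart.2 (.disjoint_apply (mem_forcedPart.1 hX) hA𝓑 hv hdisj))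
  intro A hA B hB
  rcases mem_union.1 hA with hA | hA <;> rcases mem_union.1 hB with hB | hB
  · exact hint _ (mem_sdiff.1 hA).1 _ (mem_sdiff.1 hB).1
  · obtain ⟨Y, hY, rfl⟩ := mem_image.1 hB
    exact meets A hA Y hY
  · obtain ⟨X, hX, rfl⟩ := mem_image.1 hA
    rw [inter_comm]
    exact meets B hB X hX
  · obtain ⟨X, -, rfl⟩ := mem_image.1 hA
    obtain ⟨Y, -, rfl⟩ := mem_image.1 hB
    exact ⟨v, mem_inter.2 ⟨hC.mem_apply X, hC.mem_apply Y⟩⟩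

lemma disjoint_image_forcedPart (hC : IsCompressionTo C v) (h𝓑 : 𝓑 ⊆ 𝓐)
    (hint : IsIntersecting 𝓑) : Disjoint 𝓑 ((forcedPart C v 𝓐 𝓑).image C) := by
  rw [disjoint_right]
  intro _ hCX
  obtain ⟨X, hX, rfl⟩ := mem_image.1 hCX
  exact (mem_forcedPart.1 hX).apply_not_mem_of_compressForced_eq hC h𝓑 hint rfl

lemma card_compressForced (hC : IsCompressionTo C v) (h𝓑 : 𝓑 ⊆ 𝓐) (hint : IsIntersecting 𝓑) :
    #(compressForced C v 𝓐 𝓑) = #𝓑 := by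
  rw [compressForced,
    card_union_of_disjoint ((disjoint_image_forcedPart hC h𝓑 hint).mono_left sdiff_subset),
    card_image_of_injOn (hC.injOn.mono fun X hX => (mem_forcedPart.1 hX).not_mem),
    card_sdiff_add_card_eq_card forcedPart_subset]

lemma forcedPart_subset_of_compressForced_eq (hC : IsCompressionTo C v) (h𝓑₁ : 𝓑₁ ⊆ 𝓐)
    (hint : IsIntersecting 𝓑₁) (heq : compressForced C v 𝓐 𝓑₁ = compressForced C v 𝓐 𝓑₂) :
    forcedPart C v 𝓐 𝓑₂ ⊆ forcedPart C v 𝓐 𝓑₁ := by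
  intro X hX
  rw [mem_forcedPart] at hX ⊢
  exact isForced_of_apply_mem_compressForced hC hX.not_mem (heq ▸ hX.apply_mem_compressForced)
    (hX.apply_not_mem_of_compressForced_eq hC h𝓑₁ hint heq)

lemma sdiff_forcedPart_eq (hC : IsCompressionTo C v) (h𝓑 : 𝓑 ⊆ 𝓐) (hint : IsIntersecting 𝓑) :
    𝓑 \ forcedPart C v 𝓐 𝓑 = compressForced C v 𝓐 𝓑 \ (forcedPart C v 𝓐 𝓑).image C := by
  rw [compressForced, union_sdiff_cancel_right
    ((disjoint_image_forcedPart hC h𝓑 hint).mono_left sdiff_subset)]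

lemma compressForced_injOn (hC : IsCompressionTo C v) :
    Set.InjOn (compressForced C v 𝓐) {𝓑 | 𝓑 ⊆ 𝓐 ∧ IsIntersecting 𝓑} := by
  rintro 𝓑₁ ⟨h𝓑₁, hint₁⟩ 𝓑₂ ⟨h𝓑₂, hint₂⟩ heq
  have hforced : forcedPart C v 𝓐 𝓑₁ = forcedPart C v 𝓐 𝓑₂ :=
    (forcedPart_subset_of_compressForced_eq hC h𝓑₂ hint₂ heq.symm).antisymm
      (forcedPart_subset_of_compressForced_eq hC h𝓑₁ hint₁ heq)
  have hrest : 𝓑₁ \ forcedPart C v 𝓐 𝓑₁ = 𝓑₂ \ forcedPart C v 𝓐 𝓑₂ := by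
    rw [sdiff_forcedPart_eq hC h𝓑₁ hint₁, sdiff_forcedPart_eq hC h𝓑₂ hint₂, heq, hforced]
  calc 𝓑₁ = 𝓑₁ \ forcedPart C v 𝓐 𝓑₁ ∪ forcedPart C v 𝓐 𝓑₁ :=
        (sdiff_union_of_subset forcedPart_subset).symm
    _ = 𝓑₂ \ forcedPart C v 𝓐 𝓑₂ ∪ forcedPart C v 𝓐 𝓑₂ := by rw [hrest, hforced]
    _ = 𝓑₂ := sdiff_union_of_subset forcedPart_subset

theorem numInter_le_numInter_compressFamily (hC : IsCompressionTo C v)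
    (𝓐 : Finset (Finset ℕ)) (m : ℕ) : numInter 𝓐 m ≤ numInter (compressFamily C 𝓐) m := by
  refine card_le_card_of_injOn (compressForced C v 𝓐) ?_ ((compressForced_injOn hC).mono ?_)
  · intro 𝓑 h𝓑
    simp only [coe_filter, mem_filter, mem_powerset, Set.mem_ofPred_eq] at h𝓑 ⊢
    obtain ⟨⟨h𝓑𝓐, hint⟩, rfl⟩ := h𝓑
    exact ⟨⟨compressForced_subset hC h𝓑𝓐, isIntersecting_compressForced hC hint⟩,
      card_compressForced hC h𝓑𝓐 hint⟩
  · intro 𝓑 h𝓑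
    simp only [coe_filter, mem_filter, mem_powerset, Set.mem_ofPred_eq] at h𝓑 ⊢
    exact h𝓑.1

end Compression

section Uvf

variable {U : Finset ℕ} {v : ℕ} {f : ℕ → ℕ}

lemma mem_setUvf_of_not_mem (hmaps : ∀ x ∈ U, f x ∈ U) (hinv : ∀ x ∈ U, f (f x) = x)
    {A : Finset ℕ} (hA : v ∉ A) {y : ℕ} :
    y ∈ setUvf U v f A ↔ y = v ∨ (y ∈ U ∧ f y ∈ A) ∨ (y ∉ U ∧ y ∈ A) := by
  rw [setUvf, if_neg hA]
  simp only [mem_union, mem_image, mem_inter, mem_singleton, mem_sdiff]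
  constructor
  · rintro ((⟨x, ⟨hxA, hxU⟩, rfl⟩ | rfl) | ⟨hyA, hyU⟩)
    · exact Or.inr (Or.inl ⟨hmaps x hxU, (hinv x hxU).symm ▸ hxA⟩)
    · exact Or.inl rfl
    · exact Or.inr (Or.inr ⟨hyU, hyA⟩)
  · rintro (rfl | ⟨hyU, hfy⟩ | ⟨hyU, hyA⟩)
    · exact Or.inl (Or.inr rfl)
    · exact Or.inl (Or.inl ⟨f y, ⟨hfy, hmaps y hyU⟩, hinv y hyU⟩)
    · exact Or.inr ⟨hyA, hyU⟩

lemma isCompressionTo_setUvf (hmaps : ∀ x ∈ U, f x ∈ U) (hinv : ∀ x ∈ U, f (f x) = x)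
    (hvU : v ∉ U) : IsCompressionTo (setUvf U v f) v where
  mem_apply A := by
    unfold setUvf
    split_ifs with hA
    · exact hA
    · simp
  apply_of_mem hA := if_pos hA
  injOn X hX Y hY h := by
    ext x
    by_cases hxU : x ∈ U
    · have hfx : f x ≠ v := ne_of_mem_of_not_mem (hmaps x hxU) hvU
      have := congrArg (f x ∈ ·) h
      simpa [mem_setUvf_of_not_mem hmaps hinv hX, mem_setUvf_of_not_mem hmaps hinv hY,
        hmaps x hxU, hinv x hxU, hfx] using this
    · by_cases hxv : x = v
      · subst hxv
        exact iff_of_false hX hY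
      · have := congrArg (x ∈ ·) h
        simpa [mem_setUvf_of_not_mem hmaps hinv hX, mem_setUvf_of_not_mem hmaps hinv hY,
          hxU, hxv] using this
  nonempty_inter_apply {X B} hX hB := by
    rintro ⟨y, hy⟩
    rw [mem_inter, mem_setUvf_of_not_mem hmaps hinv hX] at hy
    obtain ⟨rfl | ⟨hyU, hfy⟩ | ⟨hyU, hyX⟩, hyB⟩ := hy
    · exact absurd hyB hB
    · refine ⟨f y, mem_inter.2 ⟨hfy, (mem_setUvf_of_not_mem hmaps hinv hB).2 ?_⟩⟩
      exact Or.inr (Or.inl ⟨hmaps y hyU, (hinv y hyU).symm ▸ hyB⟩)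
    · refine ⟨y, mem_inter.2 ⟨hyX, (mem_setUvf_of_not_mem hmaps hinv hB).2 ?_⟩⟩
      exact Or.inr (Or.inr ⟨hyU, hyB⟩)

end Uvf

theorem stmt8_general (𝓐 : Finset (Finset ℕ))
    (U : Finset ℕ)
    (v : ℕ) (hvU : v ∉ U)
    (f : ℕ → ℕ) (hf : IsPairing f U) (m : ℕ) :
    numInter 𝓐 m ≤ numInter (famUvf U v f 𝓐) m :=
  numInter_le_numInter_compressFamily (isCompressionTo_setUvf hf.1 hf.2.1 hvU) 𝓐 m

theorem stmt8 (n : ℕ) (𝓐 : Finset (Finset ℕ)) (h𝓐 : 𝓐 ⊆ (Finset.Icc 1 n).powerset)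
    (U : Finset ℕ) (hU : U ⊆ Finset.Icc 1 n) (hUeven : Even U.card)
    (v : ℕ) (hv : v ∈ Finset.Icc 1 n) (hvU : v ∉ U)
    (f : ℕ → ℕ) (hf : IsPairing f U) (m : ℕ) :
    numInter 𝓐 m ≤ numInter (famUvf U v f 𝓐) m :=
  stmt8_general 𝓐 U v hvU f hf m
end

section
/- Let $\mathcal{A} \subseteq \mathcal{P}[n]$, let $U \subseteq [n]$ have even order, let $v \in [n] - U$, let $f : U \to U$ be a pairing function, and let $p \in (0,1)$. Then $\mathbb{P}((\mathcal{C}_{U,v,f}\mathcal{A})_p \text{ is intersecting}) \ge \mathbb{P}(\mathcal{A}_p \text{ is intersecting})$; that is, $\sum_{\mathcal{B} \subseteq \mathcal{C}_{U,v,f}\mathcal{A},\ \mathcal{B} \text{ intersecting}} p^{|\mathcal{B}|}(1-p)^{|\mathcal{C}_{U,v,f}\mathcal{A}|-|\mathcal{B}|} \ge \sum_{\mathcal{B} \subseteq \mathcal{A},\ \mathcal{B} \text{ intersecting}} p^{|\mathcal{B}|}(1-p)^{|\mathcal{A}|-|\mathcal{B}|}$. -/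
open Finset

/-!
The probability is a sum of weights `p ^ |𝓑| * (1 - p) ^ (|𝓐| - |𝓑|)` over the intersecting
`𝓑 ⊆ 𝓐`, and compression preserves `|𝓐|`, so it suffices to inject the intersecting subfamilies
of `𝓐` into those of the compressed family, preserving size. Writing `C` for the compression of
a set, `C` puts `v` into every set, is injective on the sets avoiding `v`, and for such `A`, `B`
we have `A ∩ C B = ∅ ↔ C A ∩ B = ∅` because `f` is an involution of `U`. The injection replaces
a member of `𝓑` by its compression exactly when forced to, and this symmetry lets one read the
replaced members back off the image.
-/

lemma IsIntersecting.not_disjoint {𝓑 : Finset (Finset ℕ)} (h : IsIntersecting 𝓑)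
    {A B : Finset ℕ} (hA : A ∈ 𝓑) (hB : B ∈ 𝓑) : ¬ Disjoint A B :=
  not_disjoint_iff_nonempty_inter.2 (h A hA B hB)

lemma probInter_le_of_injOn {p : ℝ} (hp0 : 0 ≤ p) (hp1 : p ≤ 1) {𝓐 𝓐' : Finset (Finset ℕ)}
    (hcard : 𝓐'.card = 𝓐.card) (φ : Finset (Finset ℕ) → Finset (Finset ℕ))
    (hmaps : Set.MapsTo φ (𝓐.powerset.filter IsIntersecting) (𝓐'.powerset.filter IsIntersecting))
    (hinj : Set.InjOn φ (𝓐.powerset.filter IsIntersecting))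
    (hφcard : ∀ 𝓑 ∈ 𝓐.powerset.filter IsIntersecting, (φ 𝓑).card = 𝓑.card) :
    probInter p 𝓐 ≤ probInter p 𝓐' := by
  classical
  calc probInter p 𝓐
      = ∑ 𝓑 ∈ (𝓐.powerset.filter IsIntersecting).image φ,
          p ^ 𝓑.card * (1 - p) ^ (𝓐'.card - 𝓑.card) := by
        rw [probInter, sum_image hinj, hcard]
        exact sum_congr rfl fun 𝓑 h𝓑 => by rw [hφcard 𝓑 h𝓑]
    _ ≤ probInter p 𝓐' :=
        sum_le_sum_of_subset_of_nonneg (image_subset_iff.2 hmaps) fun _ _ _ =>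
          mul_nonneg (pow_nonneg hp0 _) (pow_nonneg (sub_nonneg.2 hp1) _)

section setUvf

variable {U : Finset ℕ} {v : ℕ} {f : ℕ → ℕ} {A B : Finset ℕ}

lemma setUvf_of_mem (h : v ∈ A) : setUvf U v f A = A := if_pos h

lemma self_mem_setUvf : v ∈ setUvf U v f A := by
  unfold setUvf
  split_ifs with h
  · exact h
  · simp

lemma mem_setUvf_iff_of_mem (hf : IsPairing f U) (hvU : v ∉ U) (hvA : v ∉ A) {x : ℕ}
    (hx : x ∈ U) : x ∈ setUvf U v f A ↔ f x ∈ A := by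
  rw [setUvf, if_neg hvA]
  simp only [mem_union, mem_image, mem_inter, mem_singleton, mem_sdiff, hx, not_true,
    and_false, or_false]
  constructor
  · rintro (⟨y, ⟨hyA, hyU⟩, rfl⟩ | rfl)
    · rwa [hf.2.1 y hyU]
    · exact absurd hx hvU
  · exact fun h => Or.inl ⟨f x, ⟨h, hf.1 x hx⟩, hf.2.1 x hx⟩

lemma mem_setUvf_iff_of_notMem (hf : IsPairing f U) (hvA : v ∉ A) {x : ℕ} (hxU : x ∉ U)
    (hxv : x ≠ v) : x ∈ setUvf U v f A ↔ x ∈ A := by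
  rw [setUvf, if_neg hvA]
  simp only [mem_union, mem_image, mem_inter, mem_singleton, mem_sdiff, hxU, hxv,
    not_false_eq_true, and_true, or_false]
  exact or_iff_right fun ⟨y, ⟨_, hyU⟩, hyx⟩ => hxU (hyx ▸ hf.1 y hyU)

lemma setUvf_injOn (hf : IsPairing f U) (hvU : v ∉ U) :
    Set.InjOn (setUvf U v f) {A | v ∉ A} := by
  intro A hvA B hvB h
  ext x
  by_cases hxU : x ∈ U
  · rw [← hf.2.1 x hxU, ← mem_setUvf_iff_of_mem hf hvU hvA (hf.1 x hxU),
      ← mem_setUvf_iff_of_mem hf hvU hvB (hf.1 x hxU), h]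
  · by_cases hxv : x = v
    · subst hxv; exact iff_of_false hvA hvB
    · rw [← mem_setUvf_iff_of_notMem hf hvA hxU hxv, ← mem_setUvf_iff_of_notMem hf hvB hxU hxv, h]

lemma disjoint_setUvf_comm (hf : IsPairing f U) (hvU : v ∉ U) (hvA : v ∉ A) (hvB : v ∉ B)
    (h : Disjoint A (setUvf U v f B)) : Disjoint (setUvf U v f A) B := by
  refine disjoint_left.2 fun x hxA hxB => ?_
  have hxv : x ≠ v := ne_of_mem_of_not_mem hxB hvB
  by_cases hxU : x ∈ U
  · refine disjoint_left.1 h ((mem_setUvf_iff_of_mem hf hvU hvA hxU).1 hxA) ?_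
    rwa [mem_setUvf_iff_of_mem hf hvU hvB (hf.1 x hxU), hf.2.1 x hxU]
  · exact disjoint_left.1 h ((mem_setUvf_iff_of_notMem hf hvA hxU hxv).1 hxA)
      ((mem_setUvf_iff_of_notMem hf hvB hxU hxv).2 hxB)

end setUvf

section famUvf

variable {U : Finset ℕ} {v : ℕ} {f : ℕ → ℕ} {𝓐 : Finset (Finset ℕ)} {A : Finset ℕ}

lemma setUvf_mem_famUvf (hA : A ∈ 𝓐) : setUvf U v f A ∈ famUvf U v f 𝓐 :=
  mem_union_left _ (mem_image_of_mem _ hA)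

lemma mem_famUvf_of_setUvf_mem (hA : A ∈ 𝓐) (h : setUvf U v f A ∈ 𝓐) :
    A ∈ famUvf U v f 𝓐 :=
  mem_union_right _ (mem_filter.2 ⟨hA, h⟩)

lemma famUvf_eq_image : famUvf U v f 𝓐 =
    𝓐.image fun A => if setUvf U v f A ∈ 𝓐 then A else setUvf U v f A := by
  ext X
  simp only [famUvf, mem_union, mem_image, mem_filter]
  constructor
  · rintro (⟨A, hA, rfl⟩ | ⟨hX, hCX⟩)
    · by_cases hC : setUvf U v f A ∈ 𝓐
      · exact ⟨_, hC, by rw [setUvf_of_mem self_mem_setUvf, if_pos hC]⟩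
      · exact ⟨A, hA, if_neg hC⟩
    · exact ⟨X, hX, if_pos hCX⟩
  · rintro ⟨A, hA, rfl⟩
    split_ifs with hC
    · exact Or.inr ⟨hA, hC⟩
    · exact Or.inl ⟨A, hA, rfl⟩

lemma card_famUvf (hf : IsPairing f U) (hvU : v ∉ U) :
    (famUvf U v f 𝓐).card = 𝓐.card := by
  rw [famUvf_eq_image]
  refine card_image_of_injOn fun A hA B hB h => ?_
  have hvA (hC : setUvf U v f A ∉ 𝓐) : v ∉ A := fun hv => hC (by rwa [setUvf_of_mem hv])
  have hvB (hC : setUvf U v f B ∉ 𝓐) : v ∉ B := fun hv => hC (by rwa [setUvf_of_mem hv])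
  split_ifs at h with hCA hCB hCB
  · exact h
  · exact absurd (h ▸ hA) hCB
  · exact absurd (h ▸ hB) hCA
  · exact setUvf_injOn hf hvU (hvA hCA) (hvB hCB) h

end famUvf

namespace Uvf

/-- The sets of `𝓑` that the injection `moveFamily` replaces by their compressions: those whose
compression lies outside `𝓐` (they must move to land in `famUvf U v f 𝓐`) and, recursively,
those disjoint from the compression of a moved set (they must move to keep meeting it). -/
inductive Moved (U : Finset ℕ) (v : ℕ) (f : ℕ → ℕ) (𝓐 𝓑 : Finset (Finset ℕ)) :
    Finset ℕ → Prop
  | base {A : Finset ℕ} : A ∈ 𝓑 → v ∉ A → setUvf U v f A ∉ 𝓐 → Moved U v f 𝓐 𝓑 A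
  | step {A B : Finset ℕ} : A ∈ 𝓑 → v ∉ A → Moved U v f 𝓐 𝓑 B →
      Disjoint A (setUvf U v f B) → Moved U v f 𝓐 𝓑 A

open scoped Classical in
noncomputable def moveSet (U : Finset ℕ) (v : ℕ) (f : ℕ → ℕ) (𝓐 𝓑 : Finset (Finset ℕ))
    (A : Finset ℕ) : Finset ℕ :=
  if Moved U v f 𝓐 𝓑 A then setUvf U v f A else A

noncomputable def moveFamily (U : Finset ℕ) (v : ℕ) (f : ℕ → ℕ)
    (𝓐 𝓑 : Finset (Finset ℕ)) : Finset (Finset ℕ) :=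
  𝓑.image (moveSet U v f 𝓐 𝓑)

variable {U : Finset ℕ} {v : ℕ} {f : ℕ → ℕ} {𝓐 𝓑 𝓑₁ 𝓑₂ : Finset (Finset ℕ)}
  {A : Finset ℕ}

lemma Moved.mem (h : Moved U v f 𝓐 𝓑 A) : A ∈ 𝓑 := by
  cases h with
  | base hA _ _ => exact hA
  | step hA _ _ _ => exact hA

lemma Moved.notMem (h : Moved U v f 𝓐 𝓑 A) : v ∉ A := by
  cases h with
  | base _ hvA _ => exact hvA
  | step _ hvA _ _ => exact hvA

lemma Moved.setUvf_notMem (hf : IsPairing f U) (hvU : v ∉ U) (h𝓑 : 𝓑 ⊆ 𝓐)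
    (hint : IsIntersecting 𝓑) (h : Moved U v f 𝓐 𝓑 A) : setUvf U v f A ∉ 𝓑 := by
  cases h with
  | base _ _ hC => exact fun hmem => hC (h𝓑 hmem)
  | step _ hvA hB hdisj =>
      exact fun hmem => hint.not_disjoint hmem hB.mem
        (disjoint_setUvf_comm hf hvU hvA hB.notMem hdisj)

lemma moveSet_of_moved (h : Moved U v f 𝓐 𝓑 A) : moveSet U v f 𝓐 𝓑 A = setUvf U v f A := by
  classical
  exact if_pos h

lemma moveSet_of_not_moved (h : ¬ Moved U v f 𝓐 𝓑 A) : moveSet U v f 𝓐 𝓑 A = A := by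
  classical
  exact if_neg h

lemma moveFamily_subset_famUvf (h𝓑 : 𝓑 ⊆ 𝓐) : moveFamily U v f 𝓐 𝓑 ⊆ famUvf U v f 𝓐 := by
  intro X hX
  obtain ⟨A, hA, rfl⟩ := mem_image.1 hX
  by_cases hm : Moved U v f 𝓐 𝓑 A
  · rw [moveSet_of_moved hm]
    exact setUvf_mem_famUvf (h𝓑 hA)
  · rw [moveSet_of_not_moved hm]
    refine mem_famUvf_of_setUvf_mem (h𝓑 hA) ?_
    by_cases hvA : v ∈ A
    · rw [setUvf_of_mem hvA]; exact h𝓑 hA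
    · exact not_not.1 fun hC => hm (.base hA hvA hC)

lemma isIntersecting_moveFamily (hint : IsIntersecting 𝓑) :
    IsIntersecting (moveFamily U v f 𝓐 𝓑) := by
  have key {A B : Finset ℕ} (hA : Moved U v f 𝓐 𝓑 A) (hB : B ∈ 𝓑)
      (hBm : ¬ Moved U v f 𝓐 𝓑 B) : (setUvf U v f A ∩ B).Nonempty := by
    by_cases hvB : v ∈ B
    · exact ⟨v, mem_inter.2 ⟨self_mem_setUvf, hvB⟩⟩
    · rw [← not_disjoint_iff_nonempty_inter, disjoint_comm]
      exact fun hdisj => hBm (.step hB hvB hA hdisj)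
  intro X hX Y hY
  obtain ⟨A, hA, rfl⟩ := mem_image.1 hX
  obtain ⟨B, hB, rfl⟩ := mem_image.1 hY
  by_cases hAm : Moved U v f 𝓐 𝓑 A <;> by_cases hBm : Moved U v f 𝓐 𝓑 B
  · rw [moveSet_of_moved hAm, moveSet_of_moved hBm]
    exact ⟨v, mem_inter.2 ⟨self_mem_setUvf, self_mem_setUvf⟩⟩
  · rw [moveSet_of_moved hAm, moveSet_of_not_moved hBm]
    exact key hAm hB hBm
  · rw [moveSet_of_not_moved hAm, moveSet_of_moved hBm, inter_comm]
    exact key hBm hA hAm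
  · rw [moveSet_of_not_moved hAm, moveSet_of_not_moved hBm]
    exact hint A hA B hB

lemma card_moveFamily (hf : IsPairing f U) (hvU : v ∉ U) (h𝓑 : 𝓑 ⊆ 𝓐)
    (hint : IsIntersecting 𝓑) : (moveFamily U v f 𝓐 𝓑).card = 𝓑.card := by
  refine card_image_of_injOn fun A hA B hB h => ?_
  by_cases hAm : Moved U v f 𝓐 𝓑 A <;> by_cases hBm : Moved U v f 𝓐 𝓑 B
  · rw [moveSet_of_moved hAm, moveSet_of_moved hBm] at h
    exact setUvf_injOn hf hvU hAm.notMem hBm.notMem h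
  · rw [moveSet_of_moved hAm, moveSet_of_not_moved hBm] at h
    exact absurd (h ▸ hB) (hAm.setUvf_notMem hf hvU h𝓑 hint)
  · rw [moveSet_of_not_moved hAm, moveSet_of_moved hBm] at h
    exact absurd (h ▸ hA) (hBm.setUvf_notMem hf hvU h𝓑 hint)
  · rwa [moveSet_of_not_moved hAm, moveSet_of_not_moved hBm] at h

lemma moved_or_setUvf_mem (hf : IsPairing f U) (hvU : v ∉ U) (hvA : v ∉ A)
    (h : setUvf U v f A ∈ moveFamily U v f 𝓐 𝓑) :
    Moved U v f 𝓐 𝓑 A ∨ setUvf U v f A ∈ 𝓑 := by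
  obtain ⟨B, hB, hBA⟩ := mem_image.1 h
  by_cases hBm : Moved U v f 𝓐 𝓑 B
  · rw [moveSet_of_moved hBm] at hBA
    exact .inl (setUvf_injOn hf hvU hBm.notMem hvA hBA ▸ hBm)
  · rw [moveSet_of_not_moved hBm] at hBA
    exact .inr (hBA ▸ hB)

lemma Moved.of_moveFamily_eq (hf : IsPairing f U) (hvU : v ∉ U) (h𝓑₂ : 𝓑₂ ⊆ 𝓐)
    (hint₂ : IsIntersecting 𝓑₂) (heq : moveFamily U v f 𝓐 𝓑₁ = moveFamily U v f 𝓐 𝓑₂)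
    (h : Moved U v f 𝓐 𝓑₁ A) : Moved U v f 𝓐 𝓑₂ A := by
  have hmem {X : Finset ℕ} (hX : Moved U v f 𝓐 𝓑₁ X) :
      setUvf U v f X ∈ moveFamily U v f 𝓐 𝓑₂ :=
    heq ▸ moveSet_of_moved hX ▸ mem_image_of_mem _ hX.mem
  induction h with
  | base hA hvA hC =>
      exact (moved_or_setUvf_mem hf hvU hvA (hmem (.base hA hvA hC))).resolve_right
        fun h => hC (h𝓑₂ h)
  | step hA hvA hB hdisj ih =>
      exact (moved_or_setUvf_mem hf hvU hvA (hmem (.step hA hvA hB hdisj))).resolve_right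
        fun h => hint₂.not_disjoint h ih.mem (disjoint_setUvf_comm hf hvU hvA hB.notMem hdisj)

lemma subset_of_moveFamily_eq (hf : IsPairing f U) (hvU : v ∉ U) (h𝓑₁ : 𝓑₁ ⊆ 𝓐)
    (h𝓑₂ : 𝓑₂ ⊆ 𝓐) (hint₁ : IsIntersecting 𝓑₁) (hint₂ : IsIntersecting 𝓑₂)
    (heq : moveFamily U v f 𝓐 𝓑₁ = moveFamily U v f 𝓐 𝓑₂) : 𝓑₁ ⊆ 𝓑₂ := by
  intro X hX
  by_cases hXm : Moved U v f 𝓐 𝓑₁ X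
  · exact (hXm.of_moveFamily_eq hf hvU h𝓑₂ hint₂ heq).mem
  have hX₂ : X ∈ moveFamily U v f 𝓐 𝓑₂ :=
    heq ▸ moveSet_of_not_moved hXm ▸ mem_image_of_mem _ hX
  obtain ⟨Y, hY, hYX⟩ := mem_image.1 hX₂
  by_cases hYm : Moved U v f 𝓐 𝓑₂ Y
  · rw [moveSet_of_moved hYm] at hYX
    have hYm₁ := hYm.of_moveFamily_eq hf hvU h𝓑₁ hint₁ heq.symm
    exact absurd (hYX ▸ hX) (hYm₁.setUvf_notMem hf hvU h𝓑₁ hint₁)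
  · rw [moveSet_of_not_moved hYm] at hYX
    exact hYX ▸ hY

lemma moveFamily_injOn (hf : IsPairing f U) (hvU : v ∉ U) :
    Set.InjOn (moveFamily U v f 𝓐) (𝓐.powerset.filter IsIntersecting) := by
  intro 𝓑₁ h₁ 𝓑₂ h₂ heq
  simp only [coe_filter, mem_powerset] at h₁ h₂
  exact (subset_of_moveFamily_eq hf hvU h₁.1 h₂.1 h₁.2 h₂.2 heq).antisymm
    (subset_of_moveFamily_eq hf hvU h₂.1 h₁.1 h₂.2 h₁.2 heq.symm)

end Uvf

theorem stmt9_general (𝓐 : Finset (Finset ℕ))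
    (U : Finset ℕ)
    (v : ℕ) (hvU : v ∉ U)
    (f : ℕ → ℕ) (hf : IsPairing f U)
    (p : ℝ) (hp0 : 0 < p) (hp1 : p < 1) :
    probInter p 𝓐 ≤ probInter p (famUvf U v f 𝓐) := by
  refine probInter_le_of_injOn hp0.le hp1.le (card_famUvf hf hvU) (Uvf.moveFamily U v f 𝓐)
    (fun 𝓑 h𝓑 => ?_) (Uvf.moveFamily_injOn hf hvU) fun 𝓑 h𝓑 => ?_ <;>
    simp only [coe_filter, mem_filter, mem_powerset] at h𝓑 ⊢
  · exact ⟨Uvf.moveFamily_subset_famUvf h𝓑.1, Uvf.isIntersecting_moveFamily h𝓑.2⟩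
  · exact Uvf.card_moveFamily hf hvU h𝓑.1 h𝓑.2

theorem stmt9 (n : ℕ) (𝓐 : Finset (Finset ℕ)) (h𝓐 : 𝓐 ⊆ (Finset.Icc 1 n).powerset)
    (U : Finset ℕ) (hU : U ⊆ Finset.Icc 1 n) (hUeven : Even U.card)
    (v : ℕ) (hv : v ∈ Finset.Icc 1 n) (hvU : v ∉ U)
    (f : ℕ → ℕ) (hf : IsPairing f U)
    (p : ℝ) (hp0 : 0 < p) (hp1 : p < 1) :
    probInter p 𝓐 ≤ probInter p (famUvf U v f 𝓐) :=
  stmt9_general 𝓐 U v hvU f hf p hp0 hp1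
end

section
/- Let $n$ and $r$ be positive integers with $r \le n/2$, and let $\mathcal{A} \subseteq \mathcal{P}[n]$ with $|\mathcal{A}| = \sum_{j=r}^n \binom{n}{j}$. Then for every nonnegative integer $m$, the family $[n]^{(\geq r)}$ has at least as many intersecting subfamilies of order $m$ as has $\mathcal{A}$. -/
open Finset

/-!
Both families have the same size, so it suffices to transform `𝓐` into `[n]^{(≥ r)}` by steps
that never decrease the number of intersecting subfamilies of a given order. If
`𝓐 ≠ [n]^{(≥ r)}`, there are `X ∈ 𝓐` and `Y ∉ 𝓐` with `|Y| = |X| + 1`, and a `(U,v,f)`-compression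
`σ` with `σ X = Y`; compressing strictly increases the total size of the members, so the process
terminates.

A compression does not decrease the counts because all moved sets share the point `v`: an
intersecting `𝓑 ⊆ 𝓐` is sent to the subfamily of the compressed family in which exactly the members
that must move are replaced by their images. A member must move if its image leaves `𝓐`, or if
staying would make it disjoint from the image of a moving member. The result is intersecting, and
since disjointness from a moved set is symmetric under `σ`, distinct `𝓑` have distinct images.
-/

section Compression

/-- `famUvf U v f` is `compression (setUvf U v f)`. -/
def compression (σ : Finset ℕ → Finset ℕ) (𝓐 : Finset (Finset ℕ)) : Finset (Finset ℕ) :=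
  𝓐.image σ ∪ 𝓐.filter (fun A => σ A ∈ 𝓐)

def compressMember (σ : Finset ℕ → Finset ℕ) (𝓐 : Finset (Finset ℕ)) (X : Finset ℕ) :
    Finset ℕ :=
  if σ X ∈ 𝓐 then X else σ X

structure IsCompression (σ : Finset ℕ → Finset ℕ) : Prop where
  idem (X : Finset ℕ) : σ (σ X) = σ X
  inj {X Y : Finset ℕ} : σ X ≠ X → σ Y ≠ Y → σ X = σ Y → X = Y
  inter_moved {X Y : Finset ℕ} : σ X ≠ X → σ Y ≠ Y → (σ X ∩ σ Y).Nonempty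
  inter_fixed_moved {X Y : Finset ℕ} :
    σ X = X → σ Y ≠ Y → (X ∩ Y).Nonempty → (X ∩ σ Y).Nonempty
  disjoint_swap {X Y : Finset ℕ} :
    σ X ≠ X → σ Y ≠ Y → Disjoint X (σ Y) → Disjoint (σ X) Y

variable {σ : Finset ℕ → Finset ℕ} {𝓐 𝓑 𝓑₁ 𝓑₂ : Finset (Finset ℕ)} {X Y : Finset ℕ}

theorem compression_eq_image (hσ : IsCompression σ) (𝓐 : Finset (Finset ℕ)) :
    compression σ 𝓐 = 𝓐.image (compressMember σ 𝓐) := by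
  ext Z
  simp only [compression, compressMember, mem_union, mem_image, mem_filter]
  constructor
  · rintro (⟨X, hX, rfl⟩ | ⟨hZ, hσZ⟩)
    · by_cases hσX : σ X ∈ 𝓐
      · exact ⟨σ X, hσX, by simp [hσ.idem]⟩
      · exact ⟨X, hX, if_neg hσX⟩
    · exact ⟨Z, hZ, if_pos hσZ⟩
  · rintro ⟨X, hX, rfl⟩
    split_ifs with hσX
    · exact Or.inr ⟨hX, hσX⟩
    · exact Or.inl ⟨X, hX, rfl⟩

theorem compressMember_injOn (hσ : IsCompression σ) (𝓐 : Finset (Finset ℕ)) :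
    Set.InjOn (compressMember σ 𝓐) 𝓐 := by
  intro X hX Y hY h
  simp only [compressMember] at h
  split_ifs at h with hσX hσY hσY
  · exact h
  · exact absurd (h ▸ hX) hσY
  · exact absurd (h ▸ hY) hσX
  · exact hσ.inj (ne_of_mem_of_not_mem hX hσX).symm (ne_of_mem_of_not_mem hY hσY).symm h

theorem card_compression (hσ : IsCompression σ) (𝓐 : Finset (Finset ℕ)) :
    #(compression σ 𝓐) = #𝓐 := by
  rw [compression_eq_image hσ, card_image_of_injOn (compressMember_injOn hσ 𝓐)]

theorem sum_card_lt_sum_card_compression (hσ : IsCompression σ)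
    (hgrow : ∀ X, σ X ≠ X → #X < #(σ X)) (hX : X ∈ 𝓐) (hσX : σ X ∉ 𝓐) :
    ∑ A ∈ 𝓐, #A < ∑ A ∈ compression σ 𝓐, #A := by
  rw [compression_eq_image hσ, sum_image (compressMember_injOn hσ 𝓐)]
  refine sum_lt_sum (fun A hA => ?_) ⟨X, hX, ?_⟩
  · unfold compressMember
    split_ifs with hσA
    · exact le_rfl
    · exact (hgrow A (ne_of_mem_of_not_mem hA hσA).symm).le
  · rw [compressMember, if_neg hσX]
    exact hgrow X (ne_of_mem_of_not_mem hX hσX).symm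

theorem compression_subset {𝓒 : Finset (Finset ℕ)} (h𝓐 : 𝓐 ⊆ 𝓒) (hσ : ∀ A ∈ 𝓐, σ A ∈ 𝓒) :
    compression σ 𝓐 ⊆ 𝓒 :=
  union_subset (image_subset_iff.2 hσ) ((filter_subset _ _).trans h𝓐)

inductive Moves (σ : Finset ℕ → Finset ℕ) (𝓐 𝓑 : Finset (Finset ℕ)) : Finset ℕ → Prop
  | leaves {X : Finset ℕ} : X ∈ 𝓑 → σ X ∉ 𝓐 → Moves σ 𝓐 𝓑 X
  | avoids {X Y : Finset ℕ} : X ∈ 𝓑 → σ X ≠ X → Moves σ 𝓐 𝓑 Y →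
      Disjoint X (σ Y) → Moves σ 𝓐 𝓑 X

open Classical in
noncomputable def moveIn (σ : Finset ℕ → Finset ℕ) (𝓐 𝓑 : Finset (Finset ℕ)) (X : Finset ℕ) :
    Finset ℕ :=
  if Moves σ 𝓐 𝓑 X then σ X else X

theorem moveIn_of_moves (h : Moves σ 𝓐 𝓑 X) : moveIn σ 𝓐 𝓑 X = σ X := by
  classical exact if_pos h

theorem moveIn_of_not_moves (h : ¬ Moves σ 𝓐 𝓑 X) : moveIn σ 𝓐 𝓑 X = X := by
  classical exact if_neg h

theorem Moves.mem (h : Moves σ 𝓐 𝓑 X) : X ∈ 𝓑 := by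
  cases h <;> assumption

theorem Moves.ne (hb : 𝓑 ⊆ 𝓐) (h : Moves σ 𝓐 𝓑 X) : σ X ≠ X := by
  cases h with
  | leaves hX hσX => exact (ne_of_mem_of_not_mem (hb hX) hσX).symm
  | avoids _ hne _ _ => exact hne

theorem moveIn_mem_compression (hb : 𝓑 ⊆ 𝓐) (hX : X ∈ 𝓑) :
    moveIn σ 𝓐 𝓑 X ∈ compression σ 𝓐 := by
  by_cases hm : Moves σ 𝓐 𝓑 X
  · rw [moveIn_of_moves hm]
    exact mem_union_left _ (mem_image_of_mem σ (hb hX))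
  · rw [moveIn_of_not_moves hm]
    refine mem_union_right _ (mem_filter.2 ⟨hb hX, ?_⟩)
    by_contra hσX
    exact hm (.leaves hX hσX)

theorem eq_or_eq_of_moveIn_eq (hσ : IsCompression σ) (hb : 𝓑 ⊆ 𝓐) {V : Finset ℕ}
    (hY : σ Y ≠ Y) (h : moveIn σ 𝓐 𝓑 V = σ Y) : V = Y ∨ V = σ Y := by
  by_cases hm : Moves σ 𝓐 𝓑 V
  · rw [moveIn_of_moves hm] at h
    exact .inl (hσ.inj (hm.ne hb) hY h)
  · rw [moveIn_of_not_moves hm] at h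
    exact .inr h

theorem image_moveIn_intersecting (hσ : IsCompression σ) (hb : 𝓑 ⊆ 𝓐)
    (hI : IsIntersecting 𝓑) : IsIntersecting (𝓑.image (moveIn σ 𝓐 𝓑)) := by
  have stay_move : ∀ X ∈ 𝓑, ∀ Y, ¬ Moves σ 𝓐 𝓑 X → Moves σ 𝓐 𝓑 Y →
      (X ∩ σ Y).Nonempty := by
    intro X hX Y hmX hmY
    by_cases hfix : σ X = X
    · exact hσ.inter_fixed_moved hfix (hmY.ne hb) (hI X hX Y hmY.mem)
    · rw [← not_disjoint_iff_nonempty_inter]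
      exact fun hdisj => hmX (.avoids hX hfix hmY hdisj)
  simp only [IsIntersecting, mem_image]
  rintro _ ⟨X, hX, rfl⟩ _ ⟨Y, hY, rfl⟩
  by_cases hmX : Moves σ 𝓐 𝓑 X <;> by_cases hmY : Moves σ 𝓐 𝓑 Y
  · rw [moveIn_of_moves hmX, moveIn_of_moves hmY]
    exact hσ.inter_moved (hmX.ne hb) (hmY.ne hb)
  · rw [moveIn_of_moves hmX, moveIn_of_not_moves hmY, inter_comm]
    exact stay_move Y hY X hmY hmX
  · rw [moveIn_of_not_moves hmX, moveIn_of_moves hmY]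
    exact stay_move X hX Y hmX hmY
  · rw [moveIn_of_not_moves hmX, moveIn_of_not_moves hmY]
    exact hI X hX Y hY

theorem Moves.sigma_notMem (hσ : IsCompression σ) (hb₁ : 𝓑₁ ⊆ 𝓐) (hb₂ : 𝓑₂ ⊆ 𝓐)
    (hI₁ : IsIntersecting 𝓑₁) (himg : 𝓑₁.image (moveIn σ 𝓐 𝓑₁) = 𝓑₂.image (moveIn σ 𝓐 𝓑₂))
    (h : Moves σ 𝓐 𝓑₂ X) : σ X ∉ 𝓑₁ := by
  induction h with
  | leaves _ hσX => exact fun hmem => hσX (hb₁ hmem)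
  | @avoids X Y _ hne hmY hdisj ih =>
    intro hmem
    have hdisj' : Disjoint (σ X) Y := hσ.disjoint_swap hne (hmY.ne hb₂) hdisj
    by_cases hY₁ : Y ∈ 𝓑₁
    · exact not_disjoint_iff_nonempty_inter.2 (hI₁ _ hmem _ hY₁) hdisj'
    have hσY : σ Y ∈ 𝓑₁.image (moveIn σ 𝓐 𝓑₁) :=
      himg ▸ mem_image.2 ⟨Y, hmY.mem, moveIn_of_moves hmY⟩
    obtain ⟨V, hV, hVY⟩ := mem_image.1 hσY
    rcases eq_or_eq_of_moveIn_eq hσ hb₁ (hmY.ne hb₂) hVY with rfl | rfl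
    · exact hY₁ hV
    · exact ih hV

theorem moveIn_injOn (hσ : IsCompression σ) (hb : 𝓑 ⊆ 𝓐) (hI : IsIntersecting 𝓑) :
    Set.InjOn (moveIn σ 𝓐 𝓑) 𝓑 := by
  have of_moves : ∀ X, Moves σ 𝓐 𝓑 X → ∀ Y ∈ 𝓑, moveIn σ 𝓐 𝓑 X = moveIn σ 𝓐 𝓑 Y → X = Y := by
    intro X hm Y hY h
    rw [moveIn_of_moves hm] at h
    rcases eq_or_eq_of_moveIn_eq hσ hb (hm.ne hb) h.symm with rfl | rfl
    · rfl
    · exact absurd hY (hm.sigma_notMem hσ hb hb hI rfl)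
  intro X hX Y hY h
  by_cases hmX : Moves σ 𝓐 𝓑 X
  · exact of_moves X hmX Y hY h
  by_cases hmY : Moves σ 𝓐 𝓑 Y
  · exact (of_moves Y hmY X hX h.symm).symm
  rwa [moveIn_of_not_moves hmX, moveIn_of_not_moves hmY] at h

theorem subset_of_image_moveIn_eq (hσ : IsCompression σ) (hb₁ : 𝓑₁ ⊆ 𝓐) (hb₂ : 𝓑₂ ⊆ 𝓐)
    (hI₁ : IsIntersecting 𝓑₁) (hI₂ : IsIntersecting 𝓑₂)
    (himg : 𝓑₁.image (moveIn σ 𝓐 𝓑₁) = 𝓑₂.image (moveIn σ 𝓐 𝓑₂)) : 𝓑₁ ⊆ 𝓑₂ := by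
  intro X hX
  by_contra hX₂
  by_cases hm : Moves σ 𝓐 𝓑₁ X
  · have hσX : σ X ∈ 𝓑₂.image (moveIn σ 𝓐 𝓑₂) :=
      himg ▸ mem_image.2 ⟨X, hX, moveIn_of_moves hm⟩
    obtain ⟨W, hW, hWX⟩ := mem_image.1 hσX
    rcases eq_or_eq_of_moveIn_eq hσ hb₂ (hm.ne hb₁) hWX with rfl | rfl
    · exact hX₂ hW
    · exact hm.sigma_notMem hσ hb₂ hb₁ hI₂ himg.symm hW
  · have hX' : X ∈ 𝓑₂.image (moveIn σ 𝓐 𝓑₂) :=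
      himg ▸ mem_image.2 ⟨X, hX, moveIn_of_not_moves hm⟩
    obtain ⟨W, hW, hWX⟩ := mem_image.1 hX'
    by_cases hmW : Moves σ 𝓐 𝓑₂ W
    · rw [moveIn_of_moves hmW] at hWX
      exact hmW.sigma_notMem hσ hb₁ hb₂ hI₁ himg (hWX ▸ hX)
    · rw [moveIn_of_not_moves hmW] at hWX
      exact hX₂ (hWX ▸ hW)

theorem numInter_le_numInter_compression (hσ : IsCompression σ) (𝓐 : Finset (Finset ℕ))
    (m : ℕ) : numInter 𝓐 m ≤ numInter (compression σ 𝓐) m := by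
  unfold numInter
  refine card_le_card_of_injOn (fun 𝓑 => 𝓑.image (moveIn σ 𝓐 𝓑)) ?_ ?_
  · intro 𝓑 h
    simp only [mem_coe, mem_filter, mem_powerset] at h ⊢
    obtain ⟨⟨hb, hI⟩, rfl⟩ := h
    refine ⟨⟨fun Z hZ => ?_, image_moveIn_intersecting hσ hb hI⟩,
      card_image_of_injOn (moveIn_injOn hσ hb hI)⟩
    obtain ⟨X, hX, rfl⟩ := mem_image.1 hZ
    exact moveIn_mem_compression hb hX
  · intro 𝓑₁ h₁ 𝓑₂ h₂ himg
    simp only [mem_coe, mem_filter, mem_powerset] at h₁ h₂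
    obtain ⟨⟨hb₁, hI₁⟩, -⟩ := h₁
    obtain ⟨⟨hb₂, hI₂⟩, -⟩ := h₂
    exact (subset_of_image_moveIn_eq hσ hb₁ hb₂ hI₁ hI₂ himg).antisymm
      (subset_of_image_moveIn_eq hσ hb₂ hb₁ hI₂ hI₁ himg.symm)

end Compression

theorem exists_involutive_image_eq {α : Type*} [DecidableEq α] {D E : Finset α}
    (hDE : Disjoint D E) (hcard : #D = #E) :
    ∃ g : α → α, Function.Involutive g ∧ D.image g = E ∧ ∀ x ∉ D ∪ E, g x = x := by
  let e := equivOfCardEq hcard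
  let g : α → α := fun x =>
    if hD : x ∈ D then e ⟨x, hD⟩ else if hE : x ∈ E then e.symm ⟨x, hE⟩ else x
  have g_of_mem_D : ∀ x (hx : x ∈ D), g x = e ⟨x, hx⟩ := fun x hx => dif_pos hx
  have g_of_mem_E : ∀ x (hx : x ∈ E), g x = e.symm ⟨x, hx⟩ := fun x hx => by
    simp only [g, dif_neg (disjoint_right.1 hDE hx), dif_pos hx]
  have g_mem_E : ∀ x ∈ D, g x ∈ E := fun x hx => g_of_mem_D x hx ▸ (e _).2
  refine ⟨g, fun x => ?_, ?_, fun x hx => ?_⟩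
  · by_cases hD : x ∈ D
    · rw [g_of_mem_E _ (g_mem_E x hD)]
      simp [g_of_mem_D x hD]
    by_cases hE : x ∈ E
    · have hgx : g x ∈ D := g_of_mem_E x hE ▸ (e.symm _).2
      rw [g_of_mem_D _ hgx]
      simp [g_of_mem_E x hE]
    · simp [g, hD, hE]
  · refine (image_subset_iff.2 g_mem_E).antisymm fun y hy => mem_image.2 ?_
    refine ⟨e.symm ⟨y, hy⟩, (e.symm _).2, ?_⟩
    rw [g_of_mem_D _ (e.symm _).2]
    simp
  · rw [mem_union, not_or] at hx
    simp [g, hx.1, hx.2]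

section Uvf

variable {U : Finset ℕ} {v : ℕ} {f : ℕ → ℕ} {A : Finset ℕ}

theorem mem_setUvf_self (A : Finset ℕ) : v ∈ setUvf U v f A := by
  unfold setUvf
  split_ifs with h
  · exact h
  · simp

theorem setUvf_eq_self_iff : setUvf U v f A = A ↔ v ∈ A :=
  ⟨fun h => h ▸ mem_setUvf_self A, fun h => if_pos h⟩

theorem mem_of_involutive_piecewise (hg : Function.Involutive (U.piecewise f id)) {x : ℕ}
    (hx : x ∈ U) : f x ∈ U := by
  by_contra hfx
  have h := hg x
  rw [piecewise_eq_of_mem _ _ _ hx, piecewise_eq_of_notMem _ _ _ hfx, id] at h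
  exact hfx (by rwa [h])

theorem setUvf_of_notMem (hv : v ∉ U) (hA : v ∉ A) :
    setUvf U v f A = insert v (A.image (U.piecewise f id)) := by
  rw [setUvf, if_neg hA]
  ext x
  simp only [mem_union, mem_image, mem_inter, mem_singleton, mem_sdiff, mem_insert]
  constructor
  · rintro ((⟨a, ⟨ha, haU⟩, rfl⟩ | rfl) | ⟨hx, hxU⟩)
    · exact .inr ⟨a, ha, piecewise_eq_of_mem _ _ _ haU⟩
    · exact .inl rfl
    · exact .inr ⟨x, hx, piecewise_eq_of_notMem _ _ _ hxU⟩
  · rintro (rfl | ⟨a, ha, rfl⟩)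
    · exact .inl (.inr rfl)
    · by_cases haU : a ∈ U
      · exact .inl (.inl ⟨a, ⟨ha, haU⟩, (piecewise_eq_of_mem _ _ _ haU).symm⟩)
      · rw [piecewise_eq_of_notMem _ _ _ haU]
        exact .inr ⟨ha, haU⟩

theorem notMem_image_piecewise (hg : Function.Involutive (U.piecewise f id)) (hv : v ∉ U)
    (hA : v ∉ A) : v ∉ A.image (U.piecewise f id) := by
  intro h
  obtain ⟨a, ha, hav⟩ := mem_image.1 h
  have h := hg a
  rw [hav, piecewise_eq_of_notMem _ _ _ hv, id] at h
  exact hA (h ▸ ha)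

theorem card_setUvf (hg : Function.Involutive (U.piecewise f id)) (hv : v ∉ U) (hA : v ∉ A) :
    #(setUvf U v f A) = #A + 1 := by
  rw [setUvf_of_notMem hv hA, card_insert_of_notMem (notMem_image_piecewise hg hv hA),
    card_image_of_injective _ hg.injective]

theorem isCompression_setUvf (hg : Function.Involutive (U.piecewise f id)) (hv : v ∉ U) :
    IsCompression (setUvf U v f) where
  idem X := setUvf_eq_self_iff.2 (mem_setUvf_self X)
  inj {X Y} hX hY h := by
    rw [Ne, setUvf_eq_self_iff] at hX hY
    rw [setUvf_of_notMem hv hX, setUvf_of_notMem hv hY] at h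
    have h' := congrArg (·.erase v) h
    simp only [erase_insert (notMem_image_piecewise hg hv hX),
      erase_insert (notMem_image_piecewise hg hv hY)] at h'
    exact image_injective hg.injective h'
  inter_moved _ _ := ⟨v, mem_inter.2 ⟨mem_setUvf_self _, mem_setUvf_self _⟩⟩
  inter_fixed_moved hX _ _ := ⟨v, mem_inter.2 ⟨setUvf_eq_self_iff.1 hX, mem_setUvf_self _⟩⟩
  disjoint_swap {X Y} hX hY h := by
    rw [Ne, setUvf_eq_self_iff] at hX hY
    rw [setUvf_of_notMem hv hY, disjoint_insert_right] at h
    rw [setUvf_of_notMem hv hX, disjoint_insert_left]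
    have h' := (disjoint_image hg.injective).2 h.2
    rw [image_image, hg.comp_self, image_id] at h'
    exact ⟨hY, h'⟩

theorem setUvf_subset (hg : Function.Involutive (U.piecewise f id)) {S : Finset ℕ} (hU : U ⊆ S)
    (hvS : v ∈ S) (hA : A ⊆ S) : setUvf U v f A ⊆ S := by
  unfold setUvf
  split_ifs
  · exact hA
  · refine union_subset (union_subset ?_ (singleton_subset_iff.2 hvS))
      ((sdiff_subset).trans hA)
    simp only [image_subset_iff, mem_inter]
    exact fun x hx => hU (mem_of_involutive_piecewise hg hx.2)

theorem exists_setUvf_eq {S X Y : Finset ℕ} (hX : X ⊆ S) (hY : Y ⊆ S) (hXY : #Y = #X + 1) :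
    ∃ U v f, Function.Involutive (U.piecewise f id) ∧ v ∉ U ∧ U ⊆ S ∧ v ∈ S ∧
      setUvf U v f X = Y := by
  have hcard : #(Y \ X) = #(X \ Y) + 1 := by
    have h₁ := card_sdiff_add_card Y X
    have h₂ := card_sdiff_add_card X Y
    rw [union_comm] at h₂
    omega
  obtain ⟨v, hv⟩ : (Y \ X).Nonempty := by
    rw [← card_pos]
    omega
  set E := (Y \ X).erase v
  obtain ⟨g, hg, hgD, hfix⟩ := exists_involutive_image_eq (D := X \ Y) (E := E)
    (disjoint_sdiff_self_left.mono_right ((erase_subset _ _).trans sdiff_subset))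
    (by rw [card_erase_of_mem hv]; omega)
  have hvU : v ∉ X \ Y ∪ E := by
    simp only [mem_union, mem_sdiff, E, notMem_erase, or_false]
    exact fun h => (mem_sdiff.1 hv).2 h.1
  have hpw : (X \ Y ∪ E).piecewise g id = g := funext fun x => by
    by_cases hx : x ∈ X \ Y ∪ E
    · exact piecewise_eq_of_mem _ _ _ hx
    · rw [piecewise_eq_of_notMem _ _ _ hx, hfix x hx, id]
  have hg_inter : Set.EqOn g id ↑(X ∩ Y) := fun x hx => by
    refine hfix x fun hxU => ?_
    rw [mem_coe, mem_inter] at hx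
    rcases mem_union.1 hxU with hxD | hxE
    · exact (mem_sdiff.1 hxD).2 hx.2
    · exact (mem_sdiff.1 (mem_of_mem_erase hxE)).2 hx.1
  refine ⟨X \ Y ∪ E, v, g, by rwa [hpw], hvU,
    union_subset (sdiff_subset.trans hX) ((erase_subset _ _).trans (sdiff_subset.trans hY)),
    hY (mem_sdiff.1 hv).1, ?_⟩
  rw [setUvf_of_notMem hvU (mem_sdiff.1 hv).2, hpw]
  calc insert v (X.image g) = insert v ((X \ Y).image g ∪ (X ∩ Y).image g) := by
        rw [← image_union, sdiff_union_inter]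
    _ = Y \ X ∪ Y ∩ X := by
        rw [hgD, image_congr hg_inter, image_id, ← insert_union, insert_erase hv, inter_comm]
    _ = Y := sdiff_union_inter Y X

end Uvf

section AtLeast

variable {n r : ℕ} {𝓐 : Finset (Finset ℕ)}

theorem card_le_of_subset_Icc {A : Finset ℕ} (h : A ⊆ Icc 1 n) : #A ≤ n := by
  simpa using card_le_card h

theorem card_atLeast (n r : ℕ) : #(atLeast n r) = ∑ j ∈ Icc r n, n.choose j := by
  have hmaps : Set.MapsTo card (atLeast n r : Set (Finset ℕ)) (Icc r n : Set ℕ) :=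
    fun A hA => by
      rw [mem_coe, atLeast, mem_filter, mem_powerset] at hA
      exact mem_coe.2 (mem_Icc.2 ⟨hA.2, card_le_of_subset_Icc hA.1⟩)
  rw [card_eq_sum_card_fiberwise hmaps]
  refine sum_congr rfl fun j hj => ?_
  have hfiber : {A ∈ atLeast n r | #A = j} = powersetCard j (Icc 1 n) := by
    ext A
    simp only [atLeast, mem_filter, mem_powerset, mem_powersetCard]
    constructor
    · exact fun h => ⟨h.1.1, h.2⟩
    · exact fun h => ⟨⟨h.1, h.2 ▸ (mem_Icc.1 hj).1⟩, h.2⟩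
  rw [hfiber, card_powersetCard, Nat.card_Icc, Nat.add_sub_cancel]

theorem sum_card_le_mul_card (h𝓐 : 𝓐 ⊆ (Icc 1 n).powerset) : ∑ A ∈ 𝓐, #A ≤ n * #𝓐 := by
  calc ∑ A ∈ 𝓐, #A ≤ ∑ _A ∈ 𝓐, n :=
        sum_le_sum fun A hA => card_le_of_subset_Icc (mem_powerset.1 (h𝓐 hA))
    _ = n * #𝓐 := by rw [sum_const, smul_eq_mul, mul_comm]

theorem atLeast_subset_of_upward_closed
    (hup : ∀ X ∈ 𝓐, ∀ Y ⊆ Icc 1 n, #Y = #X + 1 → Y ∈ 𝓐) {X : Finset ℕ} (hX : X ∈ 𝓐) :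
    atLeast n (#X + 1) ⊆ 𝓐 := by
  suffices h : ∀ k ≥ #X + 1, ∀ Y ⊆ Icc 1 n, #Y = k → Y ∈ 𝓐 by
    intro Y hY
    rw [atLeast, mem_filter, mem_powerset] at hY
    exact h _ hY.2 Y hY.1 rfl
  intro k hk
  induction k, hk using Nat.le_induction with
  | base => exact hup X hX
  | succ k hk ih =>
    intro Y hY hYk
    obtain ⟨Z, hZY, hZk⟩ := exists_subset_card_eq (show k ≤ #Y by omega)
    exact hup Z (ih Z (hZY.trans hY) hZk) Y hY (by omega)

theorem exists_mem_card_succ_notMem (h𝓐 : 𝓐 ⊆ (Icc 1 n).powerset)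
    (hcard : #𝓐 = #(atLeast n r)) (hne : 𝓐 ≠ atLeast n r) :
    ∃ X ∈ 𝓐, ∃ Y ⊆ Icc 1 n, #Y = #X + 1 ∧ Y ∉ 𝓐 := by
  by_contra! hup
  refine hne (eq_of_subset_of_card_le (fun X hX => ?_) hcard.ge)
  refine mem_filter.2 ⟨h𝓐 hX, ?_⟩
  by_contra! hXr
  have hsub : insert X (atLeast n (#X + 1)) ⊆ 𝓐 :=
    insert_subset hX (atLeast_subset_of_upward_closed hup hX)
  have hX' : X ∉ atLeast n (#X + 1) := by simp [atLeast]
  have hmono : atLeast n r ⊆ atLeast n (#X + 1) :=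
    monotone_filter_right _ fun _ _ h => by omega
  have h₁ := card_le_card hsub
  have h₂ := card_le_card hmono
  rw [card_insert_of_notMem hX'] at h₁
  omega

theorem exists_compression_step (h𝓐 : 𝓐 ⊆ (Icc 1 n).powerset)
    (hcard : #𝓐 = #(atLeast n r)) (hne : 𝓐 ≠ atLeast n r) :
    ∃ 𝓐' ⊆ (Icc 1 n).powerset, #𝓐' = #𝓐 ∧ ∑ A ∈ 𝓐, #A < ∑ A ∈ 𝓐', #A ∧
      ∀ m, numInter 𝓐 m ≤ numInter 𝓐' m := by
  obtain ⟨X, hX, Y, hY, hXY, hY𝓐⟩ := exists_mem_card_succ_notMem h𝓐 hcard hne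
  obtain ⟨U, v, f, hg, hv, hU, hvS, rfl⟩ := exists_setUvf_eq (mem_powerset.1 (h𝓐 hX)) hY hXY
  have hσ := isCompression_setUvf hg hv
  have hgrow : ∀ A, setUvf U v f A ≠ A → #A < #(setUvf U v f A) := fun A hA => by
    rw [card_setUvf hg hv (mt setUvf_eq_self_iff.2 hA)]
    omega
  refine ⟨compression (setUvf U v f) 𝓐, ?_, card_compression hσ 𝓐,
    sum_card_lt_sum_card_compression hσ hgrow hX hY𝓐, numInter_le_numInter_compression hσ 𝓐⟩
  exact compression_subset h𝓐 fun A hA =>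
    mem_powerset.2 (setUvf_subset hg hU hvS (mem_powerset.1 (h𝓐 hA)))

theorem numInter_le_numInter_atLeast (h𝓐 : 𝓐 ⊆ (Icc 1 n).powerset)
    (hcard : #𝓐 = #(atLeast n r)) (m : ℕ) : numInter 𝓐 m ≤ numInter (atLeast n r) m := by
  induction hk : n * #𝓐 - ∑ A ∈ 𝓐, #A using Nat.strong_induction_on generalizing 𝓐 with
  | _ k ih =>
    by_cases heq : 𝓐 = atLeast n r
    · rw [heq]
    obtain ⟨𝓐', hsub, hcard', hlt, hle⟩ := exists_compression_step h𝓐 hcard heq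
    have hbound := sum_card_le_mul_card hsub
    refine (hle m).trans (ih _ ?_ hsub (hcard'.trans hcard) rfl)
    rw [hcard'] at hbound ⊢
    omega

end AtLeast

theorem stmt10_general (n r : ℕ)
    (𝓐 : Finset (Finset ℕ)) (h𝓐 : 𝓐 ⊆ (Finset.Icc 1 n).powerset)
    (hcard : 𝓐.card = ∑ j ∈ Finset.Icc r n, n.choose j) (m : ℕ) :
    numInter 𝓐 m ≤ numInter (atLeast n r) m :=
  numInter_le_numInter_atLeast h𝓐 (hcard.trans (card_atLeast n r).symm) m

theorem stmt10 (n r : ℕ) (hn : 0 < n) (hr : 0 < r) (hrn : 2 * r ≤ n)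
    (𝓐 : Finset (Finset ℕ)) (h𝓐 : 𝓐 ⊆ (Finset.Icc 1 n).powerset)
    (hcard : 𝓐.card = ∑ j ∈ Finset.Icc r n, n.choose j) (m : ℕ) :
    numInter 𝓐 m ≤ numInter (atLeast n r) m :=
  stmt10_general n r 𝓐 h𝓐 hcard m
end

section
/- Let $t$ be a positive integer, let $\mathcal{A} \subseteq \mathcal{P}[n]$ be $t$-intersecting, and let $U, V \subseteq [n]$ be disjoint with $|U| > |V|$. Suppose that $\mathcal{A}$ is $U'V'$-compressed for all $U' \subseteq U$ and $V' \subseteq V$ with $|U'| > |V'|$ and $(U',V') \neq (U,V)$. Then $\mathcal{C}_{UV}\mathcal{A}$ is $t$-intersecting. -/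
open Finset

/-!
Write `A' = (A ∪ U) \ V` for the compression of a member `A` with `V ⊆ A` and `U ∩ A = ∅`.
Two compressed sets meet in `((A ∩ B) \ V) ∪ U`, which is larger than `A ∩ B` as `|U| > |V|`.
For a compressed `A'` and a member `B` that survives the compression, some member of `𝓐` meets
`B` (or `A`) in exactly `|A' ∩ B|` points: if `V ⊄ B`, the `(U, V ∩ B)`-compression of `A`, which
lies in `𝓐` by hypothesis; if `V ⊆ B` and `u ∈ U ∩ B`, the `(U - u, V - v)`-compression of `A`
for any `v ∈ V` (when `V = ∅`, simply `A ⊆ A'`); and if `V ⊆ B` misses `U`, then `B` survives only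
because `B' ∈ 𝓐`, and `|A' ∩ B| = |A ∩ B'|`.
-/

section CompressInter

variable {α : Type*} [DecidableEq α] {U V A B : Finset α}

lemma card_compress_inter_add_card_inter (hVA : V ⊆ A) (hUA : Disjoint U A) :
    #(((A ∪ U) \ V) ∩ B) + #(V ∩ B) = #(A ∩ B) + #(U ∩ B) := by
  have hUV : Disjoint U V := hUA.mono_right hVA
  have hsplit : ((A ∪ U) \ V) ∩ B = ((A ∩ B) \ (V ∩ B)) ∪ (U ∩ B) := by
    ext x
    have : x ∈ U → x ∉ A := fun h => disjoint_left.mp hUA h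
    have : x ∈ U → x ∉ V := fun h => disjoint_left.mp hUV h
    have : x ∈ V → x ∈ A := fun h => hVA h
    simp only [mem_inter, mem_sdiff, mem_union]
    tauto
  have hdisj : Disjoint ((A ∩ B) \ (V ∩ B)) (U ∩ B) :=
    (hUA.mono inter_subset_left (sdiff_subset.trans inter_subset_left)).symm
  have hsub : V ∩ B ⊆ A ∩ B := inter_subset_inter_right hVA
  rw [hsplit, card_union_of_disjoint hdisj, card_sdiff_of_subset hsub]
  have := card_le_card hsub
  omega

lemma card_inter_le_card_compress_inter_compress (hUV : Disjoint U V) (hUA : Disjoint U A)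
    (hVU : #V ≤ #U) : #(A ∩ B) ≤ #(((A ∪ U) \ V) ∩ ((B ∪ U) \ V)) := by
  have hsplit : ((A ∪ U) \ V) ∩ ((B ∪ U) \ V) = ((A ∩ B) \ V) ∪ U := by
    ext x
    have : x ∈ U → x ∉ V := fun h => disjoint_left.mp hUV h
    simp only [mem_inter, mem_sdiff, mem_union]
    tauto
  have hdisj : Disjoint ((A ∩ B) \ V) U :=
    (hUA.mono_right (sdiff_subset.trans inter_subset_left)).symm
  calc #(A ∩ B) ≤ #((A ∩ B) \ V) + #V := card_le_card_sdiff_add_card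
    _ ≤ #((A ∩ B) \ V) + #U := by omega
    _ = _ := by rw [hsplit, card_union_of_disjoint hdisj]

lemma card_compress_inter_eq_card_inter_compress (hVA : V ⊆ A) (hVB : V ⊆ B)
    (hUA : Disjoint U A) (hUB : Disjoint U B) :
    #(((A ∪ U) \ V) ∩ B) = #(A ∩ ((B ∪ U) \ V)) := by
  have hAB := card_compress_inter_add_card_inter (B := B) hVA hUA
  have hBA := card_compress_inter_add_card_inter (B := A) hVB hUB
  rw [inter_eq_left.mpr hVB, disjoint_iff_inter_eq_empty.mp hUB, card_empty] at hAB
  rw [inter_eq_left.mpr hVA, disjoint_iff_inter_eq_empty.mp hUA, card_empty, inter_comm B] at hBA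
  rw [inter_comm A]
  omega

lemma card_compress_erase_inter (hVA : V ⊆ A) (hUA : Disjoint U A) {u v : α}
    (hu : u ∈ U ∩ B) (hv : v ∈ V ∩ B) :
    #(((A ∪ U.erase u) \ V.erase v) ∩ B) = #(((A ∪ U) \ V) ∩ B) := by
  have h := card_compress_inter_add_card_inter (B := B) hVA hUA
  have h' := card_compress_inter_add_card_inter (B := B) ((erase_subset v V).trans hVA)
    (hUA.mono_left (erase_subset u U))
  rw [erase_inter, erase_inter, card_erase_of_mem hu, card_erase_of_mem hv] at h'
  have := card_pos.mpr ⟨u, hu⟩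
  have := card_pos.mpr ⟨v, hv⟩
  omega

lemma sdiff_inter_inter_self (S V B : Finset α) : (S \ (V ∩ B)) ∩ B = (S \ V) ∩ B := by
  ext x
  simp only [mem_inter, mem_sdiff]
  tauto

end CompressInter

section FamUV

variable {U V A B X : Finset ℕ} {𝓐 : Finset (Finset ℕ)}

lemma setUV_of_compressible (hVA : V ⊆ A) (hUA : Disjoint U A) : setUV U V A = (A ∪ U) \ V :=
  if_pos ⟨hVA, hUA⟩

lemma setUV_mem_of_famUV_eq (h : famUV U V 𝓐 = 𝓐) (hA : A ∈ 𝓐) : setUV U V A ∈ 𝓐 :=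
  h ▸ mem_union_left _ (mem_image_of_mem _ hA)

lemma mem_or_exists_compress_of_mem_famUV (hX : X ∈ famUV U V 𝓐) :
    X ∈ 𝓐 ∨ ∃ A ∈ 𝓐, V ⊆ A ∧ Disjoint U A ∧ X = (A ∪ U) \ V := by
  rcases mem_union.mp hX with hX | hX
  · obtain ⟨A, hA, rfl⟩ := mem_image.mp hX
    by_cases hc : V ⊆ A ∧ Disjoint U A
    · exact Or.inr ⟨A, hA, hc.1, hc.2, if_pos hc⟩
    · exact Or.inl (by rwa [setUV, if_neg hc])
  · exact Or.inl (mem_filter.mp hX).1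

/-- `B` cannot be the image of a compressible set, since that image contains `U`. -/
lemma setUV_mem_of_mem_famUV (hU : U.Nonempty) (hUB : Disjoint U B) (hB : B ∈ famUV U V 𝓐) :
    setUV U V B ∈ 𝓐 := by
  rcases mem_union.mp hB with hB | hB
  · obtain ⟨C, hC, rfl⟩ := mem_image.mp hB
    by_cases hc : V ⊆ C ∧ Disjoint U C
    · obtain ⟨u, hu⟩ := hU
      have huV : u ∉ V := fun huV => disjoint_left.mp hc.2 hu (hc.1 huV)
      rw [setUV, if_pos hc] at hUB
      exact absurd (mem_sdiff.mpr ⟨mem_union_right C hu, huV⟩) (disjoint_left.mp hUB hu)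
    · have hCC : setUV U V C = C := if_neg hc
      rwa [hCC, hCC]
  · exact (mem_filter.mp hB).2

end FamUV

lemma le_card_compress_inter {t : ℕ} {𝓐 : Finset (Finset ℕ)} {U V A B : Finset ℕ}
    (hT : TIntersecting t 𝓐) (hcard : #V < #U)
    (hcomp : ∀ U' V' : Finset ℕ, U' ⊆ U → V' ⊆ V → #V' < #U' →
      (U', V') ≠ (U, V) → famUV U' V' 𝓐 = 𝓐)
    (hA : A ∈ 𝓐) (hVA : V ⊆ A) (hUA : Disjoint U A)
    (hB : B ∈ 𝓐) (hBc : B ∈ famUV U V 𝓐) :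
    t ≤ #(((A ∪ U) \ V) ∩ B) := by
  by_cases hVB : V ⊆ B
  swap
  · have hne : (U, V ∩ B) ≠ (U, V) := fun h => hVB (inter_eq_left.mp (Prod.mk_inj.mp h).2)
    have hA' := setUV_mem_of_famUV_eq (hcomp U (V ∩ B) subset_rfl inter_subset_left
      ((card_le_card inter_subset_left).trans_lt hcard) hne) hA
    rw [setUV_of_compressible (inter_subset_left.trans hVA) hUA] at hA'
    simpa only [sdiff_inter_inter_self] using hT _ hA' B hB
  obtain rfl | ⟨v, hv⟩ := V.eq_empty_or_nonempty
  · rw [sdiff_empty]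
    exact (hT A hA B hB).trans (card_le_card (inter_subset_inter subset_union_left subset_rfl))
  obtain hUB | ⟨u, hu⟩ := (U ∩ B).eq_empty_or_nonempty
  · have hUB := disjoint_iff_inter_eq_empty.mpr hUB
    have hB' := setUV_mem_of_mem_famUV (card_pos.mp (Nat.zero_le _ |>.trans_lt hcard)) hUB hBc
    rw [setUV_of_compressible hVB hUB] at hB'
    rw [card_compress_inter_eq_card_inter_compress hVA hVB hUA hUB]
    exact hT A hA _ hB'
  · have huU := (mem_inter.mp hu).1
    have hne : (U.erase u, V.erase v) ≠ (U, V) := fun h =>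
      notMem_erase u U (by rwa [(Prod.mk_inj.mp h).1])
    have hcard' : #(V.erase v) < #(U.erase u) := by
      rw [card_erase_of_mem hv, card_erase_of_mem huU]
      have := card_pos.mpr ⟨v, hv⟩
      omega
    have hA' := setUV_mem_of_famUV_eq
      (hcomp _ _ (erase_subset u U) (erase_subset v V) hcard' hne) hA
    rw [setUV_of_compressible ((erase_subset v V).trans hVA) (hUA.mono_left (erase_subset u U))]
      at hA'
    rw [← card_compress_erase_inter hVA hUA hu (mem_inter.mpr ⟨hv, hVB hv⟩)]
    exact hT _ hA' B hB

theorem stmt15_general (t : ℕ) (𝓐 : Finset (Finset ℕ)) (hT : TIntersecting t 𝓐) (U V : Finset ℕ)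
    (hUV : Disjoint U V) (hcard : V.card < U.card)
    (hcomp : ∀ U' V' : Finset ℕ, U' ⊆ U → V' ⊆ V → V'.card < U'.card →
      (U', V') ≠ (U, V) → famUV U' V' 𝓐 = 𝓐) :
    TIntersecting t (famUV U V 𝓐) := by
  intro X hX Y hY
  rcases mem_or_exists_compress_of_mem_famUV hX with hX𝓐 | ⟨A, hA, hVA, hUA, rfl⟩ <;>
    rcases mem_or_exists_compress_of_mem_famUV hY with hY𝓐 | ⟨B, hB, hVB, hUB, rfl⟩
  · exact hT X hX𝓐 Y hY𝓐
  · rw [inter_comm]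
    exact le_card_compress_inter hT hcard hcomp hB hVB hUB hX𝓐 hX
  · exact le_card_compress_inter hT hcard hcomp hA hVA hUA hY𝓐 hY
  · exact (hT A hA B hB).trans (card_inter_le_card_compress_inter_compress hUV hUA hcard.le)

theorem stmt15 (n t : ℕ) (ht : 0 < t)
    (𝓐 : Finset (Finset ℕ)) (h𝓐 : 𝓐 ⊆ (Finset.Icc 1 n).powerset)
    (hT : TIntersecting t 𝓐)
    (U V : Finset ℕ) (hU : U ⊆ Finset.Icc 1 n) (hV : V ⊆ Finset.Icc 1 n)
    (hUV : Disjoint U V) (hcard : V.card < U.card)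
    (hcomp : ∀ U' V' : Finset ℕ, U' ⊆ U → V' ⊆ V → V'.card < U'.card →
      (U', V') ≠ (U, V) → famUV U' V' 𝓐 = 𝓐) :
    TIntersecting t (famUV U V 𝓐) :=
  stmt15_general t 𝓐 hT U V hUV hcard hcomp
end
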